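/- Let X be a doubling metric measure space (closed balls of positive radius having positive finite measure) such that μ(B(x,r) △ B(y,r)) → 0 as y → x for all x, r. Then for every n ∈ ℕ, the set L(n) = {f ∈ L^p(X) : f is n-Lipschitz, ‖f‖_p ≤ n, supp f ⊆ B(x₀,n)} is compact in L^p(X), and hence Lip_b(X) = ∪_n L(n), the set of Lipschitz functions in L^p(X) with bounded support, is σ-compact. -/

import Mathlib

/-!
Doubling makes every closed ball totally bounded and bounds the measure of the unit balls
centred in a fixed ball uniformly from below. Together with the `Lᵖ` bound this bounds the
Lipschitz representatives of the elements of `L(n)` uniformly, so `L(n)` is the image in `Lᵖ` of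
an Arzelà–Ascoli compact set of bounded continuous functions, cut down by a closed ball.
-/

open MeasureTheory Metric Filter
open scoped ENNReal NNReal BoundedContinuousFunction

section Doubling

variable {X : Type*} [PseudoMetricSpace X] [MeasurableSpace X] {μ : Measure X} {C : ℝ≥0}

theorem measure_closedBall_two_pow_mul_le
    (hdbl : ∀ (x : X) (r : ℝ), 0 < r → μ (closedBall x (2 * r)) ≤ C * μ (closedBall x r))
    (x : X) {r : ℝ} (hr : 0 < r) (k : ℕ) :
    μ (closedBall x (2 ^ k * r)) ≤ (C : ℝ≥0∞) ^ k * μ (closedBall x r) := by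
  induction k with
  | zero => simp
  | succ k ih =>
    calc μ (closedBall x (2 ^ (k + 1) * r)) = μ (closedBall x (2 * (2 ^ k * r))) := by
          rw [pow_succ', mul_assoc]
      _ ≤ C * μ (closedBall x (2 ^ k * r)) := hdbl x _ (by positivity)
      _ ≤ C * (C ^ k * μ (closedBall x r)) := by gcongr
      _ = C ^ (k + 1) * μ (closedBall x r) := by ring

/-- For `x ∈ closedBall x₀ R` the ball `closedBall x (2 ^ k * r)` contains `closedBall x₀ r`
with `k` independent of `x`, so `c` can be taken below `μ (closedBall x₀ r) / C ^ k`. -/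
theorem exists_pos_le_measure_closedBall
    (hdbl : ∀ (x : X) (r : ℝ), 0 < r → μ (closedBall x (2 * r)) ≤ C * μ (closedBall x r))
    (x₀ : X) (R : ℝ) {r : ℝ} (hr : 0 < r) (hμ : μ (closedBall x₀ r) ≠ 0) :
    ∃ c : ℝ≥0, 0 < c ∧ ∀ x ∈ closedBall x₀ R, (c : ℝ≥0∞) ≤ μ (closedBall x r) := by
  obtain ⟨k, hk⟩ := pow_unbounded_of_one_lt ((R + r) / r) one_lt_two
  rw [div_lt_iff₀ hr] at hk
  have hpos : 0 < μ (closedBall x₀ r) / (C : ℝ≥0∞) ^ k :=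
    ENNReal.div_pos hμ (ENNReal.pow_ne_top ENNReal.coe_ne_top)
  obtain ⟨c, hc0, hc⟩ := ENNReal.lt_iff_exists_nnreal_btwn.1 hpos
  refine ⟨c, ENNReal.coe_pos.1 hc0, fun x hx => hc.le.trans (ENNReal.div_le_of_le_mul' ?_)⟩
  have hsub : closedBall x₀ r ⊆ closedBall x (2 ^ k * r) :=
    closedBall_subset_closedBall' (by rw [dist_comm]; linarith [mem_closedBall.1 hx])
  exact (measure_mono hsub).trans (measure_closedBall_two_pow_mul_le hdbl x hr k)

/-- An infinite `ε`-separated sequence in `s` would give infinitely many disjoint balls of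
measure bounded below inside a set of finite measure. -/
theorem totallyBounded_of_forall_le_measure_closedBall [OpensMeasurableSpace X] {s : Set X}
    (hfin : ∀ r > 0, μ (cthickening r s) ≠ ⊤)
    (hlow : ∀ r > 0, ∃ c : ℝ≥0, 0 < c ∧ ∀ x ∈ s, (c : ℝ≥0∞) ≤ μ (closedBall x r)) :
    TotallyBounded s := by
  rw [Metric.totallyBounded_iff]
  intro ε hε
  by_contra! hcov
  obtain ⟨u, hu⟩ := Set.seq_of_forall_finite_exists
    (P := fun x t => x ∈ s ∧ ∀ y ∈ t, ε ≤ dist x y) fun t ht => by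
      obtain ⟨x, hxs, hx⟩ := Set.not_subset.1 (hcov t ht)
      simp only [Set.mem_iUnion, mem_ball, not_exists, not_lt] at hx
      exact ⟨x, hxs, fun y hy => hx y hy⟩
  obtain ⟨c, hc0, hc⟩ := hlow (ε / 3) (by positivity)
  have hdisj : Pairwise (Function.onFun Disjoint fun n => closedBall (u n) (ε / 3)) := by
    intro m n hmn
    rcases hmn.lt_or_gt with h | h
    · exact closedBall_disjoint_closedBall <| by
        linarith [dist_comm (u m) (u n), (hu n).2 (u m) ⟨m, h, rfl⟩]
    · exact closedBall_disjoint_closedBall <| by linarith [(hu m).2 (u n) ⟨n, h, rfl⟩]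
  have hunion : μ (⋃ n, closedBall (u n) (ε / 3)) ≠ ⊤ :=
    ne_top_of_le_ne_top (hfin (ε / 3) (by positivity))
      (measure_mono (Set.iUnion_subset fun n => closedBall_subset_cthickening (hu n).1 _))
  have hfinite := Measure.finite_const_le_meas_of_disjoint_iUnion μ (ENNReal.coe_pos.2 hc0)
    (fun n => measurableSet_closedBall) hdisj hunion
  exact Set.infinite_univ (hfinite.subset fun n _ => hc _ (hu n).1)

theorem totallyBounded_closedBall_of_doubling [OpensMeasurableSpace X]
    (hdbl : ∀ (x : X) (r : ℝ), 0 < r → μ (closedBall x (2 * r)) ≤ C * μ (closedBall x r))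
    (hball : ∀ (x : X) (r : ℝ), 0 < r → μ (closedBall x r) ≠ 0 ∧ μ (closedBall x r) ≠ ⊤)
    (x₀ : X) {R : ℝ} (hR : 0 ≤ R) :
    TotallyBounded (closedBall x₀ R) := by
  refine totallyBounded_of_forall_le_measure_closedBall (fun r hr => ?_)
    fun r hr => exists_pos_le_measure_closedBall hdbl x₀ R hr (hball x₀ r hr).1
  rw [← cthickening_singleton x₀ hR]
  refine ne_top_of_le_ne_top (hball x₀ (r + R) (by positivity)).2 (measure_mono ?_)
  rw [← cthickening_singleton x₀ (by positivity)]
  exact cthickening_cthickening_subset hr.le hR _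

end Doubling

namespace BoundedContinuousFunction

variable {X β : Type*} [PseudoMetricSpace X] [NormedAddCommGroup β] [ProperSpace β]

/-- Arzelà–Ascoli with the compact domain replaced by a totally bounded set carrying the
supports. -/
theorem totallyBounded_setOf_lipschitzWith {S : Set X} (hS : TotallyBounded S) (K : ℝ≥0)
    (M : ℝ) :
    TotallyBounded {g : X →ᵇ β | LipschitzWith K g ∧ ‖g‖ ≤ M ∧ Function.support g ⊆ S} := by
  classical
  refine totallyBounded_of_finite_discretization fun ε hε => ?_
  set δ := ε / (4 * (K + 1))
  have hKδ : (K : ℝ) * δ ≤ ε / 4 := by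
    rw [mul_div_assoc', div_le_div_iff₀ (by positivity) (by positivity)]
    nlinarith
  obtain ⟨tX, htX, hStX⟩ := Metric.totallyBounded_iff.1 hS δ (by positivity)
  obtain ⟨tβ, -, htβ, hβ⟩ :=
    finite_cover_balls_of_compact (isCompact_closedBall (0 : β) M) (by positivity : 0 < ε / 8)
  have := htX.fintype
  have := htβ.fintype
  have hnear (b : closedBall (0 : β) M) : ∃ z : tβ, dist (b : β) z < ε / 8 := by
    obtain ⟨z, hz, hbz⟩ := Set.mem_iUnion₂.1 (hβ b.2)
    exact ⟨⟨z, hz⟩, hbz⟩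
  choose F hF using hnear
  have hmem {g : X →ᵇ β} (hg : ‖g‖ ≤ M) (x : X) : g x ∈ closedBall (0 : β) M :=
    mem_closedBall_zero_iff.2 ((g.norm_coe_le_norm x).trans hg)
  refine ⟨tX → tβ, inferInstance, fun g a => F ⟨g.1 a, hmem g.2.2.1 a⟩, ?_⟩
  rintro ⟨g, hgK, hgM, hgS⟩ ⟨h, hhK, hhM, hhS⟩ hgh
  have hnet (a : tX) : dist (g a) (h a) < ε / 4 := by
    have hFa : F ⟨g a, hmem hgM a⟩ = F ⟨h a, hmem hhM a⟩ := congrFun hgh a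
    have hg := hF ⟨g a, hmem hgM a⟩
    have hh := hF ⟨h a, hmem hhM a⟩
    rw [hFa] at hg
    linarith [dist_triangle_right (g a) (h a) (F ⟨h a, hmem hhM a⟩ : β)]
  have hpt (x : X) : dist (g x) (h x) ≤ 3 * ε / 4 := by
    by_cases hx : x ∈ S
    · obtain ⟨a, ha, hxa⟩ := Set.mem_iUnion₂.1 (hStX hx)
      have hgxa := hgK.dist_le_mul x a
      have hhxa := hhK.dist_le_mul a x
      have hKxa : (K : ℝ) * dist x a ≤ ε / 4 :=
        (mul_le_mul_of_nonneg_left (mem_ball.1 hxa).le K.2).trans hKδ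
      rw [dist_comm a x] at hhxa
      linarith [dist_triangle4 (g x) (g a) (h a) (h x), hnet ⟨a, ha⟩]
    · rw [Function.notMem_support.1 fun h' => hx (hgS h'),
        Function.notMem_support.1 fun h' => hx (hhS h'), dist_self]
      positivity
  exact ((dist_le (by positivity)).2 hpt).trans_lt (by linarith)

theorem isCompact_setOf_lipschitzWith {S : Set X} (hS : TotallyBounded S) (K : ℝ≥0) (M : ℝ) :
    IsCompact {g : X →ᵇ β | LipschitzWith K g ∧ ‖g‖ ≤ M ∧ Function.support g ⊆ S} := by
  refine (totallyBounded_setOf_lipschitzWith hS K M).isCompact_of_isClosed ?_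
  have hsupp : IsClosed {g : X →ᵇ β | Function.support g ⊆ S} := by
    simp only [Function.support_subset_iff', Set.ofPred_forall]
    exact isClosed_iInter fun x => isClosed_iInter fun _ =>
      isClosed_eq (continuous_eval_const x) continuous_const
  have hlip : IsClosed {g : X →ᵇ β | LipschitzWith K g} :=
    (isClosed_setOfPred_lipschitzWith (α := X) (β := β) K).preimage continuous_coe
  exact hlip.inter ((isClosed_le continuous_norm continuous_const).inter hsupp)

end BoundedContinuousFunction

section Lp

variable {X : Type*} [MeasurableSpace X] {μ : Measure X} {p : ℝ≥0∞}

/-- On `closedBall x r` a `K`-Lipschitz `g` satisfies `|g| ≥ |g x| - K * r`. -/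
theorem LipschitzWith.abs_le_of_eLpNorm_le [PseudoMetricSpace X] [OpensMeasurableSpace X]
    {g : X → ℝ} {K : ℝ≥0} (hg : LipschitzWith K g) (hp0 : p ≠ 0) (hp : p ≠ ⊤) {x : X} {r : ℝ}
    {c N : ℝ≥0} (hc0 : 0 < c) (hc : (c : ℝ≥0∞) ≤ μ (closedBall x r))
    (hN : eLpNorm g p μ ≤ N) :
    |g x| ≤ K * r + N / (c : ℝ) ^ (1 / p.toReal) := by
  set a := |g x| - K * r
  have hcq : 0 < (c : ℝ) ^ (1 / p.toReal) := Real.rpow_pos_of_pos hc0 _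
  suffices a * (c : ℝ) ^ (1 / p.toReal) ≤ N by
    have := (le_div_iff₀ hcq).2 this
    linarith
  rcases le_or_gt a 0 with ha | ha
  · exact (mul_nonpos_of_nonpos_of_nonneg ha hcq.le).trans N.2
  have hlow : ∀ y, ‖(closedBall x r).indicator (fun _ => a) y‖ ≤ ‖g y‖ := by
    intro y
    by_cases hy : y ∈ closedBall x r
    · rw [Set.indicator_of_mem hy, Real.norm_of_nonneg ha.le, Real.norm_eq_abs]
      have hxy := hg.dist_le_mul x y
      rw [Real.dist_eq] at hxy
      have : (K : ℝ) * dist x y ≤ K * r := by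
        gcongr
        exact dist_comm x y ▸ mem_closedBall.1 hy
      linarith [abs_sub_abs_le_abs_sub (g x) (g y)]
    · simp [Set.indicator_of_notMem hy]
  have hball := eLpNorm_mono (μ := μ) (p := p) hlow
  rw [eLpNorm_indicator_const measurableSet_closedBall hp0 hp,
    Real.enorm_of_nonneg ha.le] at hball
  have hle : ENNReal.ofReal a * ((c ^ (1 / p.toReal) : ℝ≥0) : ℝ≥0∞) ≤ N := by
    rw [ENNReal.coe_rpow_of_nonneg _ (by positivity)]
    exact le_trans (by gcongr) (hball.trans hN)
  rw [← ENNReal.ofReal_coe_nnreal, ← ENNReal.ofReal_mul ha.le,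
    ENNReal.ofReal_le_iff_le_toReal ENNReal.coe_ne_top] at hle
  simpa using hle

variable [TopologicalSpace X] [OpensMeasurableSpace X] {E : Type*} [NormedAddCommGroup E]
  [SecondCountableTopologyEither X E] {S : Set X}

theorem BoundedContinuousFunction.memLp_indicator (hS : MeasurableSet S) (hμS : μ S ≠ ⊤)
    (g : X →ᵇ E) : MemLp (S.indicator g) p μ := by
  have : IsFiniteMeasure (μ.restrict S) := isFiniteMeasure_restrict.2 hμS
  exact (memLp_indicator_iff_restrict hS).2 <|
    .of_bound g.continuous.aestronglyMeasurable ‖g‖ (.of_forall g.norm_coe_le_norm)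

noncomputable def BoundedContinuousFunction.indicatorToLp (hS : MeasurableSet S)
    (hμS : μ S ≠ ⊤) (g : X →ᵇ E) : Lp E p μ :=
  (g.memLp_indicator hS hμS).toLp _

theorem BoundedContinuousFunction.coeFn_indicatorToLp (hS : MeasurableSet S) (hμS : μ S ≠ ⊤)
    (g : X →ᵇ E) : (g.indicatorToLp hS hμS : Lp E p μ) =ᵐ[μ] S.indicator g :=
  MemLp.coeFn_toLp _

theorem BoundedContinuousFunction.lipschitzWith_indicatorToLp [Fact (1 ≤ p)]
    (hS : MeasurableSet S) (hμS : μ S ≠ ⊤) :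
    LipschitzWith (μ S ^ (1 / p.toReal)).toNNReal
      (indicatorToLp hS hμS : (X →ᵇ E) → Lp E p μ) := by
  refine LipschitzWith.of_dist_le_mul fun g h => ?_
  rw [dist_eq_norm, indicatorToLp, indicatorToLp, ← MemLp.toLp_sub, Lp.norm_toLp,
    ← Set.indicator_sub', ← coe_sub, eLpNorm_indicator_eq_eLpNorm_restrict hS]
  have hbound := eLpNorm_le_of_ae_bound (p := p) (μ := μ.restrict S)
    (.of_forall fun x => (g - h).norm_coe_le_norm x)
  rw [Measure.restrict_apply_univ, ← dist_eq_norm] at hbound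
  refine (ENNReal.toReal_mono (by finiteness) hbound).trans_eq ?_
  rw [ENNReal.toReal_mul, ENNReal.toReal_ofReal dist_nonneg, one_div,
    ENNReal.coe_toNNReal_eq_toReal]

end Lp

open BoundedContinuousFunction in
theorem isCompact_setOf_lipschitzWith_support_subset {X : Type*} [PseudoMetricSpace X]
    [MeasurableSpace X] [OpensMeasurableSpace X] {μ : Measure X} {p : ℝ≥0∞} [Fact (1 ≤ p)]
    (hp : p ≠ ⊤) {S : Set X} (hS : MeasurableSet S) (hμS : μ S ≠ ⊤) (hSb : TotallyBounded S)
    {r : ℝ} (hr : 0 ≤ r) {c : ℝ≥0} (hc0 : 0 < c) (hc : ∀ x ∈ S, (c : ℝ≥0∞) ≤ μ (closedBall x r))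
    (K : ℝ≥0) (N : ℝ) :
    IsCompact {f : Lp ℝ p μ | ‖f‖ ≤ N ∧
      ∃ g : X → ℝ, LipschitzWith K g ∧ ⇑f =ᵐ[μ] g ∧ Function.support g ⊆ S} := by
  have hp0 : p ≠ 0 := (zero_lt_one.trans_le Fact.out).ne'
  set M : ℝ := K * r + N.toNNReal / (c : ℝ) ^ (1 / p.toReal)
  have hM : 0 ≤ M := by positivity
  set A := {g : X →ᵇ ℝ | LipschitzWith K g ∧ ‖g‖ ≤ M ∧ Function.support g ⊆ S}
  have hbound {f : Lp ℝ p μ} (hf : ‖f‖ ≤ N) {g : X → ℝ} (hg : LipschitzWith K g)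
      (hfg : ⇑f =ᵐ[μ] g) (hgS : Function.support g ⊆ S) (x : X) : ‖g x‖ ≤ M := by
    by_cases hx : x ∈ S
    · refine hg.abs_le_of_eLpNorm_le hp0 hp hc0 (hc x hx) ?_
      rw [← eLpNorm_congr_ae hfg, ← Lp.enorm_def, ← ofReal_norm]
      exact ENNReal.ofReal_le_ofReal hf
    · rw [Function.notMem_support.1 fun h => hx (hgS h), norm_zero]
      exact hM
  have hL : {f : Lp ℝ p μ | ‖f‖ ≤ N ∧
      ∃ g : X → ℝ, LipschitzWith K g ∧ ⇑f =ᵐ[μ] g ∧ Function.support g ⊆ S} =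
      indicatorToLp hS hμS '' A ∩ {f | ‖f‖ ≤ N} := by
    ext f
    constructor
    · rintro ⟨hf, g, hg, hfg, hgS⟩
      let G : X →ᵇ ℝ := .ofNormedAddCommGroup g hg.continuous M (hbound hf hg hfg hgS)
      refine ⟨⟨G, ⟨hg, (norm_le hM).2 (hbound hf hg hfg hgS), hgS⟩, Lp.ext ?_⟩, hf⟩
      refine (coeFn_indicatorToLp hS hμS G).trans ?_
      change S.indicator g =ᵐ[μ] f
      rw [Set.indicator_eq_self.2 hgS]
      exact hfg.symm
    · rintro ⟨⟨G, ⟨hG, -, hGS⟩, rfl⟩, hf⟩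
      refine ⟨hf, G, hG, ?_, hGS⟩
      simpa only [Set.indicator_eq_self.2 hGS] using coeFn_indicatorToLp hS hμS G
  rw [hL]
  exact ((isCompact_setOf_lipschitzWith hSb K M).image
    (lipschitzWith_indicatorToLp hS hμS).continuous).inter_right
    (isClosed_le continuous_norm continuous_const)

theorem setOf_lipschitzWith_isBounded_support_eq_iUnion {X : Type*} [PseudoMetricSpace X]
    [MeasurableSpace X] {μ : Measure X} {p : ℝ≥0∞} [Fact (1 ≤ p)] (x₀ : X) :
    {f : Lp ℝ p μ | ∃ (g : X → ℝ) (K : ℝ≥0), LipschitzWith K g ∧ ⇑f =ᵐ[μ] g ∧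
        Bornology.IsBounded (Function.support g)} =
      ⋃ n : ℕ, {f : Lp ℝ p μ | ‖f‖ ≤ n ∧ ∃ g : X → ℝ, LipschitzWith (n : ℝ≥0) g ∧
        ⇑f =ᵐ[μ] g ∧ Function.support g ⊆ closedBall x₀ n} := by
  ext f
  simp only [Set.mem_iUnion, Set.mem_ofPred_eq]
  constructor
  · rintro ⟨g, K, hg, hfg, hgb⟩
    obtain ⟨R, hR⟩ := hgb.subset_closedBall x₀
    obtain ⟨n, hn⟩ := exists_nat_ge (max (max ‖f‖ R) K)
    simp only [max_le_iff] at hn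
    exact ⟨n, hn.1.1, g, hg.weaken (mod_cast hn.2), hfg,
      hR.trans (closedBall_subset_closedBall hn.1.2)⟩
  · rintro ⟨n, -, g, hg, hfg, hgS⟩
    exact ⟨g, n, hg, hfg, isBounded_closedBall.subset hgS⟩

theorem Ln_compact_and_Lipb_sigmaCompact_general {X : Type*} [MetricSpace X] [MeasurableSpace X]
    [BorelSpace X] (μ : Measure X)
    (hball : ∀ (x : X) (r : ℝ), 0 < r → μ (closedBall x r) ≠ 0 ∧ μ (closedBall x r) ≠ ⊤)
    (γ : ℝ)
    (hdbl : ∀ (x : X) (r : ℝ), 0 < r →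
      μ (closedBall x (2 * r)) ≤ ENNReal.ofReal γ * μ (closedBall x r))
    (p : ℝ≥0∞) [Fact (1 ≤ p)] (hp' : p ≠ ⊤)
    (x₀ : X) :
    (∀ n : ℕ, IsCompact {f : MeasureTheory.Lp ℝ p μ | ‖f‖ ≤ (n : ℝ) ∧
      ∃ g : X → ℝ, LipschitzWith (n : NNReal) g ∧ (⇑f =ᵐ[μ] g) ∧
        Function.support g ⊆ closedBall x₀ (n : ℝ)}) ∧
    IsSigmaCompact {f : MeasureTheory.Lp ℝ p μ |
      ∃ (g : X → ℝ) (K : NNReal), LipschitzWith K g ∧ (⇑f =ᵐ[μ] g) ∧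
        Bornology.IsBounded (Function.support g)} := by
  have hL (n : ℕ) : IsCompact {f : Lp ℝ p μ | ‖f‖ ≤ (n : ℝ) ∧
      ∃ g : X → ℝ, LipschitzWith (n : ℝ≥0) g ∧ ⇑f =ᵐ[μ] g ∧
        Function.support g ⊆ closedBall x₀ (n : ℝ)} := by
    obtain ⟨c, hc0, hc⟩ :=
      exists_pos_le_measure_closedBall hdbl x₀ n one_pos (hball x₀ 1 one_pos).1
    have hμ : μ (closedBall x₀ n) ≠ ⊤ := ne_top_of_le_ne_top (hball x₀ (n + 1) (by positivity)).2
      (measure_mono (closedBall_subset_closedBall (by linarith)))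
    exact isCompact_setOf_lipschitzWith_support_subset hp' measurableSet_closedBall hμ
      (totallyBounded_closedBall_of_doubling hdbl hball x₀ n.cast_nonneg) zero_le_one hc0 hc n n
  exact ⟨hL, _, hL, (setOf_lipschitzWith_isBounded_support_eq_iUnion x₀).symm⟩

theorem Ln_compact_and_Lipb_sigmaCompact {X : Type*} [MetricSpace X] [MeasurableSpace X]
    [BorelSpace X] (μ : Measure X)
    (hball : ∀ (x : X) (r : ℝ), 0 < r → μ (closedBall x r) ≠ 0 ∧ μ (closedBall x r) ≠ ⊤)
    (γ : ℝ) (hγ : 1 ≤ γ)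
    (hdbl : ∀ (x : X) (r : ℝ), 0 < r →
      μ (closedBall x (2 * r)) ≤ ENNReal.ofReal γ * μ (closedBall x r))
    (hsymm : ∀ (x : X) (r : ℝ), 0 < r →
      Tendsto (fun y => μ (symmDiff (closedBall x r) (closedBall y r))) (nhds x) (nhds 0))
    (p : ℝ≥0∞) [Fact (1 ≤ p)] (hp' : p ≠ ⊤)
    (x₀ : X) :
    (∀ n : ℕ, IsCompact {f : MeasureTheory.Lp ℝ p μ | ‖f‖ ≤ (n : ℝ) ∧
      ∃ g : X → ℝ, LipschitzWith (n : NNReal) g ∧ (⇑f =ᵐ[μ] g) ∧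
        Function.support g ⊆ closedBall x₀ (n : ℝ)}) ∧
    IsSigmaCompact {f : MeasureTheory.Lp ℝ p μ |
      ∃ (g : X → ℝ) (K : NNReal), LipschitzWith K g ∧ (⇑f =ᵐ[μ] g) ∧
        Bornology.IsBounded (Function.support g)} :=
  Ln_compact_and_Lipb_sigmaCompact_general μ hball γ hdbl p hp' x₀
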